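/- arXiv:1507.05112 — 6 statements merged into one kernel-verified Lean document; each statement's English description precedes it below -/
import Mathlib

section
/- Let Y be an n×n lower triangular (0,1)-matrix with all diagonal entries 1 and write Y^{-1} = (a_{ij}). Then for all 1 ≤ j < i ≤ n, |a_{ij}| ≤ F_{i-j}, where F_k denotes the k-th Fibonacci number (F_1 = F_2 = 1). -/
open Finset

/-- Key sequence lemma: if `c 0 = 1` and `c m = -∑_{k<m} y m k * c k` with
`y m k ∈ {0,1}`, then `|c m| ≤ fib m` (tracking positive/negative part sums). -/
lemma fib_aux (c : ℕ → ℝ) (y : ℕ → ℕ → ℝ)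
    (hy : ∀ m k, y m k = 0 ∨ y m k = 1)
    (h0 : c 0 = 1)
    (hrec : ∀ m, 0 < m → c m = -∑ k ∈ Finset.range m, y m k * c k) :
    ∀ m : ℕ,
      (∑ k ∈ Finset.range (m+1), max (c k) 0 ≤ (Nat.fib (m+1) : ℝ)) ∧
      (∑ k ∈ Finset.range (m+1), max (-c k) 0 ≤ (Nat.fib (m+1) : ℝ)) ∧
      ((∑ k ∈ Finset.range (m+1), max (c k) 0) +
        (∑ k ∈ Finset.range (m+1), max (-c k) 0) ≤ (Nat.fib (m+2) : ℝ)) ∧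
      (0 < m → |c m| ≤ (Nat.fib m : ℝ)) := by
  intro m
  induction m with
  | zero => simp [h0]
  | succ m ih =>
    obtain ⟨hP, hN, hPN, _⟩ := ih
    set P := ∑ k ∈ Finset.range (m+1), max (c k) 0 with hPdef
    set N := ∑ k ∈ Finset.range (m+1), max (-c k) 0 with hNdef
    have hPnn : 0 ≤ P := Finset.sum_nonneg fun k _ => le_max_right _ _
    have hNnn : 0 ≤ N := Finset.sum_nonneg fun k _ => le_max_right _ _
    have hrec' : c (m+1) = -∑ k ∈ Finset.range (m+1), y (m+1) k * c k :=
      hrec _ (Nat.succ_pos m)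
    have hS1 : ∑ k ∈ Finset.range (m+1), y (m+1) k * c k ≤ P := by
      apply Finset.sum_le_sum
      intro k _
      rcases hy (m+1) k with h | h
      · rw [h, zero_mul]; exact le_max_right _ _
      · rw [h, one_mul]; exact le_max_left _ _
    have hS2 : -N ≤ ∑ k ∈ Finset.range (m+1), y (m+1) k * c k := by
      rw [hNdef, ← Finset.sum_neg_distrib]
      apply Finset.sum_le_sum
      intro k _
      rcases hy (m+1) k with h | h
      · rw [h, zero_mul]
        have : (0:ℝ) ≤ max (-c k) 0 := le_max_right _ _
        linarith
      · rw [h, one_mul]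
        have : -c k ≤ max (-c k) 0 := le_max_left _ _
        linarith
    have hcN : c (m+1) ≤ N := by rw [hrec']; linarith
    have hcP : -P ≤ c (m+1) := by rw [hrec']; linarith
    have habs : |c (m+1)| ≤ (Nat.fib (m+1) : ℝ) := by
      rw [abs_le]; constructor <;> [linarith; linarith]
    have hposstep : max (c (m+1)) 0 ≤ N := max_le hcN hNnn
    have hnegstep : max (-c (m+1)) 0 ≤ P := max_le (by linarith) hPnn
    have hsum : max (c (m+1)) 0 + max (-c (m+1)) 0 = |c (m+1)| := by
      rcases le_or_gt 0 (c (m+1)) with h | h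
      · rw [max_eq_left h, max_eq_right (by linarith), add_zero, abs_of_nonneg h]
      · rw [max_eq_right h.le, max_eq_left (by linarith), zero_add, abs_of_neg h]
    have hfib2 : (Nat.fib (m+3) : ℝ) = Nat.fib (m+1) + Nat.fib (m+2) := by
      rw [show m + 3 = (m+1) + 2 by ring, Nat.fib_add_two]; push_cast; ring
    have e1 : ∑ k ∈ Finset.range (m+1+1), max (c k) 0 = P + max (c (m+1)) 0 :=
      Finset.sum_range_succ _ _
    have e2 : ∑ k ∈ Finset.range (m+1+1), max (-c k) 0 = N + max (-c (m+1)) 0 :=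
      Finset.sum_range_succ _ _
    refine ⟨?_, ?_, ?_, fun _ => habs⟩
    · rw [e1]; linarith
    · rw [e2]; linarith
    · rw [e1, e2, show m + 1 + 2 = m + 3 from rfl, hfib2]
      linarith [hsum, habs]

/-- Theorem 2.3: the entries of `Y⁻¹` are bounded in absolute value by
Fibonacci numbers: `|a_{ij}| ≤ F_{i-j}` for `j < i`. -/
theorem stmt_3 (n : ℕ) (Y : Matrix (Fin n) (Fin n) ℝ)
    (hlower : ∀ i j, i < j → Y i j = 0)
    (h01 : ∀ i j, Y i j = 0 ∨ Y i j = 1)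
    (hdiag : ∀ i, Y i i = 1)
    (a : Matrix (Fin n) (Fin n) ℝ) (ha : a = Y⁻¹)
    (i j : Fin n) (hij : j < i) :
    |a i j| ≤ Nat.fib ((i : ℕ) - (j : ℕ)) := by
  have hbt : Y.BlockTriangular OrderDual.toDual := fun p q h => hlower p q h
  have hdet : Y.det = 1 := by
    rw [Matrix.det_of_lowerTriangular Y hbt]
    simp [hdiag]
  have hu : IsUnit Y.det := by rw [hdet]; exact isUnit_one
  haveI : Invertible Y := Y.invertibleOfIsUnitDet hu
  have ha_tri : a.BlockTriangular OrderDual.toDual := by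
    rw [ha]; exact Matrix.blockTriangular_inv_of_blockTriangular hbt
  have hzero : ∀ k : Fin n, k < j → a k j = 0 := fun k hk => ha_tri hk
  have hYa : Y * a = 1 := by
    rw [ha]; exact Matrix.mul_nonsing_inv Y hu
  have hentry : ∀ m : Fin n, ∑ k : Fin n, Y m k * a k j
      = if m = j then (1:ℝ) else 0 := by
    intro m
    have := congrFun (congrFun hYa m) j
    rw [Matrix.mul_apply] at this
    rw [this, Matrix.one_apply]
  -- the extended sequence and matrix
  set c : ℕ → ℝ := fun t => if h : (j:ℕ) + t < n then a ⟨(j:ℕ)+t, h⟩ j else 0 with hc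
  set y : ℕ → ℕ → ℝ := fun m t =>
    if h : (j:ℕ)+m < n ∧ (j:ℕ)+t < n then Y ⟨(j:ℕ)+m, h.1⟩ ⟨(j:ℕ)+t, h.2⟩ else 0 with hydef
  have hy : ∀ m t, y m t = 0 ∨ y m t = 1 := by
    intro m t
    rw [hydef]
    dsimp only
    split
    · exact h01 _ _
    · left; rfl
  have hajj : a j j = 1 := by
    have h1 := hentry j
    rw [if_pos rfl] at h1
    rw [Finset.sum_eq_single j] at h1
    · rwa [hdiag, one_mul] at h1
    · intro k _ hk
      rcases lt_or_gt_of_ne hk with h | h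
      · rw [hzero k h, mul_zero]
      · rw [hlower j k h, zero_mul]
    · simp
  have h0 : c 0 = 1 := by
    rw [hc]
    dsimp only
    rw [dif_pos (by simp [j.isLt])]
    exact hajj
  have hrec : ∀ m, 0 < m → c m = -∑ t ∈ Finset.range m, y m t * c t := by
    intro m hm
    by_cases hmn : (j:ℕ) + m < n
    · set p : Fin n := ⟨(j:ℕ)+m, hmn⟩ with hp
      have hpj : p ≠ j := by
        intro h
        have h' : (j:ℕ) + m = (j:ℕ) := congrArg Fin.val h
        omega
      have h1 := hentry p
      rw [if_neg hpj] at h1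
      -- define g on ℕ
      set g : ℕ → ℝ := fun t => if h : t < n then Y p ⟨t, h⟩ * a ⟨t, h⟩ j else 0 with hg
      have h2 : ∑ t ∈ Finset.range n, g t = 0 := by
        rw [← Fin.sum_univ_eq_sum_range g n, ← h1]
        apply Finset.sum_congr rfl
        intro k _
        rw [hg]
        dsimp only
        rw [dif_pos k.isLt]
      have h3 : ∑ t ∈ Finset.range n, g t
          = ∑ t ∈ Finset.Icc (j:ℕ) ((j:ℕ)+m), g t := by
        symm
        apply Finset.sum_subset
        · intro t ht
          rw [Finset.mem_Icc] at ht
          rw [Finset.mem_range]; omega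
        · intro t ht hnot
          rw [Finset.mem_range] at ht
          rw [Finset.mem_Icc] at hnot
          push_neg at hnot
          rw [hg]
          dsimp only
          rw [dif_pos ht]
          by_cases htj : t < (j:ℕ)
          · rw [hzero ⟨t, ht⟩ htj, mul_zero]
          · have : (j:ℕ) + m < t := hnot (by omega)
            rw [hlower p ⟨t, ht⟩ this, zero_mul]
      have h4 : ∑ t ∈ Finset.Icc (j:ℕ) ((j:ℕ)+m), g t
          = ∑ s ∈ Finset.range (m+1), g ((j:ℕ) + s) := by
        rw [show Finset.Icc (j:ℕ) ((j:ℕ)+m) = Finset.Ico (j:ℕ) ((j:ℕ)+m+1) by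
          rw [Finset.Ico_add_one_right_eq_Icc]]
        rw [Finset.sum_Ico_eq_sum_range,
          show (j:ℕ)+m+1-(j:ℕ) = m+1 from by omega]
      have h5 : g ((j:ℕ) + m) = c m := by
        rw [hg, hc]
        dsimp only
        rw [dif_pos hmn, dif_pos hmn]
        have : Y p ⟨(j:ℕ)+m, hmn⟩ = 1 := hdiag p
        rw [this, one_mul]
      have h6 : ∀ s ∈ Finset.range m, g ((j:ℕ) + s) = y m s * c s := by
        intro s hs
        rw [Finset.mem_range] at hs
        have hsn : (j:ℕ) + s < n := by omega
        rw [hg, hydef, hc]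
        dsimp only
        rw [dif_pos hsn, dif_pos ⟨hmn, hsn⟩, dif_pos hsn]
      have h7 : (0:ℝ) = (∑ s ∈ Finset.range m, y m s * c s) + c m := by
        rw [← h5, ← Finset.sum_congr rfl h6, ← Finset.sum_range_succ, ← h4, ← h3, h2]
      have : c m = -((0:ℝ) - c m) + 0 := by ring
      linarith [h7]
    · have hc0 : c m = 0 := by rw [hc]; dsimp only; rw [dif_neg hmn]
      have : ∀ t ∈ Finset.range m, y m t * c t = 0 := by
        intro t _
        rw [hydef]
        dsimp only
        rw [dif_neg (by omega), zero_mul]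
      rw [hc0, Finset.sum_congr rfl this, Finset.sum_const_zero, neg_zero]
  have key := (fib_aux c y hy h0 hrec ((i:ℕ) - (j:ℕ))).2.2.2 (by omega)
  have hcm : c ((i:ℕ) - (j:ℕ)) = a i j := by
    rw [hc]
    dsimp only
    have hlt : (j:ℕ) + ((i:ℕ) - (j:ℕ)) < n := by
      have := i.isLt; omega
    rw [dif_pos hlt]
    congr 1
    ext
    simp
    omega
  rwa [hcm] at key
end

section
/- Let Y_0 be the n×n matrix with (Y_0)_{ij} = 0 if i < j, 1 if i = j, and (1-(-1)^{i+j})/2 if i > j. Then Y_0^{-1} = (c_{ij}) where c_{ij} = 0 if i < j, c_{ii} = 1, and c_{ij} = (-1)^{i-j} F_{i-j} if i > j, with F_k the k-th Fibonacci number. -/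
open Finset

/-- Entry of `Y₀` as a function of natural indices. -/
noncomputable def Aent (i k : ℕ) : ℝ :=
  if i < k then 0 else if i = k then 1 else (1 - (-1 : ℝ) ^ (i + k)) / 2

/-- Entry of the candidate inverse as a function of natural indices. -/
noncomputable def Bent (k j : ℕ) : ℝ :=
  if k < j then 0 else if k = j then 1 else (-1 : ℝ) ^ (k - j) * Nat.fib (k - j)

noncomputable def Sterm (d m : ℕ) : ℝ :=
  (if m = d then (1:ℝ) else (1 - (-1:ℝ) ^ (d + m)) / 2) *
    (if m = 0 then 1 else (-1:ℝ) ^ m * Nat.fib m)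

noncomputable def S (d : ℕ) : ℝ := ∑ m ∈ Finset.range (d+1), Sterm d m

lemma neg_one_pow_add_two (a : ℕ) : (-1:ℝ) ^ (a + 2) = (-1:ℝ) ^ a := by
  rw [pow_add]; norm_num

lemma Sstep (d : ℕ) (hd : 1 ≤ d) : S (d + 2) = S d := by
  have hsub : ∀ m < d, Sterm (d+2) m = Sterm d m := by
    intro m hm
    unfold Sterm
    congr 1
    rw [if_neg (by omega), if_neg (by omega),
      show d + 2 + m = (d + m) + 2 by ring, neg_one_pow_add_two]
  have h1 : S (d+2) = (∑ m ∈ Finset.range d, Sterm d m)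
      + Sterm (d+2) d + Sterm (d+2) (d+1) + Sterm (d+2) (d+2) := by
    unfold S
    rw [show d + 2 + 1 = (d+1) + 1 + 1 by ring, Finset.sum_range_succ,
      Finset.sum_range_succ, Finset.sum_range_succ]
    rw [Finset.sum_congr rfl (fun m hm => hsub m (Finset.mem_range.mp hm))]
  have h2 : S d = (∑ m ∈ Finset.range d, Sterm d m) + Sterm d d := by
    unfold S; rw [Finset.sum_range_succ]
  have e0 : Sterm (d+2) d = 0 := by
    unfold Sterm
    rw [if_neg (by omega)]
    have : d + 2 + d = 2 * (d + 1) := by ring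
    rw [this, pow_mul]
    norm_num
  have e1 : Sterm (d+2) (d+1) = (-1:ℝ)^(d+1) * Nat.fib (d+1) := by
    unfold Sterm
    rw [if_neg (by omega), if_neg (by omega)]
    have : d + 2 + (d + 1) = 2 * (d + 1) + 1 := by ring
    rw [this, pow_succ, pow_mul]
    norm_num
  have e2 : Sterm (d+2) (d+2) = (-1:ℝ)^(d+2) * Nat.fib (d+2) := by
    unfold Sterm
    rw [if_pos rfl, if_neg (by omega), one_mul]
  have e3 : Sterm d d = (-1:ℝ)^d * Nat.fib d := by
    unfold Sterm
    rw [if_pos rfl, if_neg (by omega), one_mul]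
  rw [h1, h2, e0, e1, e2, e3, Nat.fib_add_two]
  push_cast
  rw [neg_one_pow_add_two, pow_succ]
  ring

lemma Sval : ∀ d, S d = if d = 0 then 1 else 0 := by
  intro d
  induction d using Nat.strong_induction_on with
  | _ d ih =>
    match d with
    | 0 => unfold S Sterm; simp
    | 1 =>
      unfold S Sterm
      rw [show (1:ℕ)+1 = 2 by rfl, Finset.sum_range_succ, Finset.sum_range_one]
      norm_num
    | 2 =>
      unfold S Sterm
      rw [show (2:ℕ)+1 = 3 by rfl, Finset.sum_range_succ, Finset.sum_range_succ,
        Finset.sum_range_one]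
      norm_num
    | (e+3) =>
      have := Sstep (e+1) (by omega)
      rw [show e+1+2 = e+3 by ring] at this
      rw [this, ih (e+1) (by omega)]
      simp

lemma key (n i j : ℕ) (hi : i < n) (hj : j < n) :
    ∑ k ∈ Finset.range n, Aent i k * Bent k j = if i = j then (1:ℝ) else 0 := by
  -- restrict to range (i+1)
  have hres : ∑ k ∈ Finset.range n, Aent i k * Bent k j
      = ∑ k ∈ Finset.range (i+1), Aent i k * Bent k j := by
    symm
    apply Finset.sum_subset (Finset.range_subset_range.mpr (show i + 1 ≤ n by omega))
    intro k hk hk'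
    have : i < k := by simp at hk'; omega
    unfold Aent
    rw [if_pos this, zero_mul]
  rw [hres]
  rcases lt_trichotomy i j with h | h | h
  · rw [if_neg (by omega)]
    apply Finset.sum_eq_zero
    intro k hk
    have : k < j := by simp at hk; omega
    unfold Bent
    rw [if_pos this, mul_zero]
  · subst h
    rw [if_pos rfl, Finset.sum_range_succ]
    have : ∑ k ∈ Finset.range i, Aent i k * Bent k i = 0 := by
      apply Finset.sum_eq_zero
      intro k hk
      have : k < i := Finset.mem_range.mp hk
      unfold Bent
      rw [if_pos this, mul_zero]
    rw [this, zero_add]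
    unfold Aent Bent
    simp
  · rw [if_neg (by omega)]
    have hsplit : ∑ k ∈ Finset.range (i+1), Aent i k * Bent k j
        = ∑ k ∈ Finset.Ico j (i+1), Aent i k * Bent k j := by
      rw [Finset.range_eq_Ico, ← Finset.sum_Ico_consecutive _ (Nat.zero_le j) (by omega)]
      have : ∑ k ∈ Finset.Ico 0 j, Aent i k * Bent k j = 0 := by
        apply Finset.sum_eq_zero
        intro k hk
        have : k < j := (Finset.mem_Ico.mp hk).2
        unfold Bent
        rw [if_pos this, mul_zero]
      rw [this, zero_add]
    rw [hsplit, Finset.sum_Ico_eq_sum_range]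
    set d := i - j with hd
    have hij : i = j + d := by omega
    have hrange : i + 1 - j = d + 1 := by omega
    rw [hrange]
    have hterm : ∀ m ∈ Finset.range (d+1), Aent i (j+m) * Bent (j+m) j = Sterm d m := by
      intro m hm
      have hm' : m ≤ d := by simp at hm; omega
      unfold Aent Bent Sterm
      have hb : (if j + m < j then (0:ℝ) else if j + m = j then 1 else
          (-1:ℝ)^(j+m-j) * Nat.fib (j+m-j))
          = (if m = 0 then (1:ℝ) else (-1:ℝ)^m * Nat.fib m) := by
        rw [if_neg (by omega)]
        by_cases h0 : m = 0
        · subst h0; simp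
        · rw [if_neg (by omega), if_neg h0, Nat.add_sub_cancel_left]
      rw [hb]
      congr 1
      rw [if_neg (by omega)]
      by_cases hmd : m = d
      · subst hmd; rw [if_pos (by omega), if_pos rfl]
      · rw [if_neg (by omega), if_neg hmd]
        have : i + (j + m) = (d + m) + 2 * j := by omega
        rw [this, pow_add, pow_mul]
        norm_num
    rw [Finset.sum_congr rfl hterm]
    have := Sval d
    rw [if_neg (by omega)] at this
    exact this

/-- The inverse of `Y₀` has entries `(-1)^{i-j} F_{i-j}` below the diagonal. -/
theorem stmt_4 (n : ℕ)
    (Y₀ : Matrix (Fin n) (Fin n) ℝ)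
    (hY₀ : ∀ i j : Fin n, Y₀ i j =
      if i < j then 0 else if i = j then 1 else
        (1 - (-1 : ℝ) ^ ((i : ℕ) + (j : ℕ))) / 2) :
    ∀ i j : Fin n, Y₀⁻¹ i j =
      if i < j then 0 else if i = j then 1 else
        (-1 : ℝ) ^ ((i : ℕ) - (j : ℕ)) * Nat.fib ((i : ℕ) - (j : ℕ)) := by
  set C : Matrix (Fin n) (Fin n) ℝ := fun i j => Bent (i : ℕ) (j : ℕ) with hC
  have hA : ∀ i j : Fin n, Y₀ i j = Aent (i : ℕ) (j : ℕ) := by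
    intro i j
    rw [hY₀]
    unfold Aent
    by_cases h1 : i < j
    · rw [if_pos h1, if_pos (Fin.lt_def.mp h1)]
    · rw [if_neg h1, if_neg (fun hc => h1 (Fin.lt_def.mpr hc))]
      by_cases h2 : i = j
      · rw [if_pos h2, if_pos (by rw [h2])]
      · rw [if_neg h2, if_neg (fun hc => h2 (Fin.ext hc))]
  have hmul : Y₀ * C = 1 := by
    ext i j
    rw [Matrix.mul_apply, Matrix.one_apply]
    have : ∀ k : Fin n, Y₀ i k * C k j = Aent (i:ℕ) (k:ℕ) * Bent (k:ℕ) (j:ℕ) := by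
      intro k; rw [hA, hC]
    simp_rw [this]
    rw [Fin.sum_univ_eq_sum_range (fun k => Aent (i:ℕ) k * Bent k (j:ℕ))]
    rw [key n i j i.isLt j.isLt]
    by_cases h : i = j
    · rw [if_pos (by rw [h]), if_pos h]
    · rw [if_neg (by simpa [Fin.ext_iff] using h), if_neg h]
  have hinv : Y₀⁻¹ = C := Matrix.inv_eq_right_inv hmul
  intro i j
  rw [hinv, hC]
  simp only [Bent]
  by_cases h1 : i < j
  · rw [if_pos h1, if_pos (Fin.lt_def.mp h1)]
  · rw [if_neg h1, if_neg (fun hc => h1 (Fin.lt_def.mpr hc))]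
    by_cases h2 : i = j
    · rw [if_pos h2, if_pos (by rw [h2])]
    · rw [if_neg h2, if_neg (fun hc => h2 (Fin.ext hc))]
end

section
/- Let Y_0 be the n×n matrix with (Y_0)_{ij} = 0 if i < j, 1 if i = j, and 1 if i > j and i+j is odd, 0 otherwise, and let Z_0 = Y_0 Y_0^T. Then for all 1 ≤ i < j ≤ n, (Z_0^{-1})_{ij} = (-1)^{j-i} ( F_{j-i} + ∑_{t=j+1}^{n} F_{t-i} F_{t-j} ). -/
open Matrix Finset

noncomputable def bF (i t : ℕ) : ℝ :=
  if i < t then 0 else if i = t then 1 else (-1) ^ (i - t) * Nat.fib (i - t)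

noncomputable def yF (t j : ℕ) : ℝ :=
  if t < j then 0 else if t = j then 1 else if t % 2 ≠ j % 2 then 1 else 0

lemma keyL (e : ℕ) : ∑ j ∈ Finset.range e,
    (if (j+1) % 2 ≠ (e+1) % 2 then ((-1:ℝ)) ^ (j+1) * Nat.fib (j+1) else 0)
    = (-1) ^ e * Nat.fib (e+1) - (if (e+1) % 2 = 1 then 1 else 0) := by
  induction e using Nat.twoStepInduction with
  | zero => simp
  | one => norm_num
  | more e ih _ =>
    have h2 : (e+2+1) % 2 = (e+1) % 2 := by omega
    rw [Finset.sum_range_succ, Finset.sum_range_succ]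
    simp only [h2]
    rw [ih]
    have hf : ¬ ((e+1) % 2 ≠ (e+1) % 2) := by omega
    have ht : (e+1+1) % 2 ≠ (e+1) % 2 := by omega
    rw [if_neg hf, if_pos ht]
    have hfib : (Nat.fib (e+2+1) : ℝ) = Nat.fib (e+2) + Nat.fib (e+1) := by
      rw [show e+2+1 = (e+1)+2 from rfl, Nat.fib_add_two]; push_cast; ring
    rw [hfib]
    ring

lemma nat_main (n i j : ℕ) (hi : i < n) (hj : j < n) :
    ∑ t ∈ Finset.range n, bF i t * yF t j = if i = j then 1 else 0 := by
  have hsub : ∑ t ∈ Finset.range n, bF i t * yF t j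
      = ∑ t ∈ Finset.range (i+1), bF i t * yF t j := by
    refine (Finset.sum_subset (Finset.range_subset_range.mpr hi) ?_).symm
    intro t ht hnt
    have h1 : i < t := by
      simp only [Finset.mem_range] at ht hnt; omega
    simp [bF, h1]
  rw [hsub]
  rcases lt_trichotomy i j with h | h | h
  · rw [if_neg (by omega)]
    refine Finset.sum_eq_zero ?_
    intro t ht
    have : t < j := by simp only [Finset.mem_range] at ht; omega
    simp [yF, this]
  · subst h
    rw [if_pos rfl, Finset.sum_range_succ]
    have h1 : ∑ t ∈ Finset.range i, bF i t * yF t i = 0 := by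
      refine Finset.sum_eq_zero ?_
      intro t ht
      have : t < i := by simpa using ht
      simp [yF, this]
    rw [h1]
    simp [bF, yF]
  · -- j < i
    rw [if_neg (by omega)]
    set e := i - j - 1 with he
    have hie : i = j + e + 1 := by omega
    rw [Finset.sum_range_succ]
    have hbii : bF i i = 1 := by simp [bF]
    have hyij : yF i j = if (e+1) % 2 = 1 then (1:ℝ) else 0 := by
      unfold yF
      rw [if_neg (by omega), if_neg (by omega)]
      by_cases hp : (e+1) % 2 = 1
      · rw [if_pos hp, if_pos (by omega)]
      · rw [if_neg hp, if_neg (by omega)]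
    have hIco : ∑ t ∈ Finset.range i, bF i t * yF t j
        = ∑ t ∈ Finset.Ico j i, bF i t * yF t j := by
      refine (Finset.sum_subset ?_ ?_).symm
      · intro t ht; simp only [Finset.mem_Ico] at ht; simp [Finset.mem_range]; omega
      · intro t ht hnt
        have : t < j := by
          simp only [Finset.mem_range] at ht; simp only [Finset.mem_Ico] at hnt; omega
        simp [yF, this]
    rw [hIco, Finset.sum_Ico_eq_sum_range]
    have hd : i - j = e + 1 := by omega
    rw [hd]
    set g : ℕ → ℝ := fun s => if s = 0 then (-1)^(e+1) * Nat.fib (e+1)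
      else if s % 2 = 1 then (-1)^(e+1-s) * Nat.fib (e+1-s) else 0 with hg
    have hcong : ∑ s ∈ Finset.range (e+1), bF i (j+s) * yF (j+s) j
        = ∑ s ∈ Finset.range (e+1), g s := by
      refine Finset.sum_congr rfl ?_
      intro s hs
      have hs1 : s < e + 1 := by simpa using hs
      have hb : bF i (j+s) = (-1)^(e+1-s) * Nat.fib (e+1-s) := by
        unfold bF
        rw [if_neg (by omega), if_neg (by omega)]
        have : i - (j+s) = e + 1 - s := by omega
        rw [this]
      rcases Nat.eq_zero_or_pos s with hs0 | hs0
      · subst hs0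
        have hy : yF (j+0) j = 1 := by simp [yF]
        rw [hy, hb, hg]
        simp
      · have hy : yF (j+s) j = if s % 2 = 1 then (1:ℝ) else 0 := by
          unfold yF
          rw [if_neg (by omega), if_neg (by omega)]
          by_cases hp : s % 2 = 1
          · rw [if_pos hp, if_pos (by omega)]
          · rw [if_neg hp, if_neg (by omega)]
        rw [hy, hb, hg]
        simp only
        by_cases hp : s % 2 = 1
        · rw [if_pos hp, if_neg (show ¬ s = 0 by omega), if_pos hp, mul_one]
        · rw [if_neg hp, if_neg (show ¬ s = 0 by omega), if_neg hp, mul_zero]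
    rw [hcong, ← Finset.sum_range_reflect g (e+1), Finset.sum_range_succ]
    have hg0 : g (e + 1 - 1 - e) = (-1)^(e+1) * Nat.fib (e+1) := by
      simp [hg]
    rw [hg0]
    have hcong2 : ∑ s ∈ Finset.range e, g (e + 1 - 1 - s)
        = ∑ s ∈ Finset.range e,
          (if (s+1) % 2 ≠ (e+1) % 2 then ((-1:ℝ)) ^ (s+1) * Nat.fib (s+1) else 0) := by
      refine Finset.sum_congr rfl ?_
      intro s hs
      have hs1 : s < e := by simpa using hs
      have h1 : e + 1 - 1 - s = e - s := by omega
      rw [h1, hg]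
      simp only
      rw [if_neg (by omega)]
      have h2 : e + 1 - (e - s) = s + 1 := by omega
      rw [h2]
      by_cases hp : (e - s) % 2 = 1
      · rw [if_pos hp, if_pos (by omega)]
      · rw [if_neg hp, if_neg (by omega)]
    rw [hcong2, keyL, hbii, one_mul, hyij]
    have : ((-1:ℝ))^(e+1) = -(-1)^e := by rw [pow_succ]; ring
    rw [this]
    ring

/-- Off-diagonal entries of `Z₀⁻¹` for `i < j`. -/
theorem stmt_8 (n : ℕ)
    (Y₀ : Matrix (Fin n) (Fin n) ℝ)
    (hY₀ : ∀ i j : Fin n, Y₀ i j =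
      if i < j then 0 else if i = j then 1 else
        if (i : ℕ) % 2 ≠ (j : ℕ) % 2 then 1 else 0)
    (Z₀ : Matrix (Fin n) (Fin n) ℝ) (hZ₀ : Z₀ = Y₀ * Y₀ᵀ) :
    ∀ i j : Fin n, i < j → Z₀⁻¹ i j =
      (-1 : ℝ) ^ ((j : ℕ) - (i : ℕ)) *
        ((Nat.fib ((j : ℕ) - (i : ℕ)) : ℝ) +
          ∑ t ∈ Finset.univ.filter (fun t : Fin n => j < t),
            (Nat.fib ((t : ℕ) - (i : ℕ)) : ℝ) * Nat.fib ((t : ℕ) - (j : ℕ))) := by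
  set B : Matrix (Fin n) (Fin n) ℝ := Matrix.of fun t s : Fin n => bF (t : ℕ) (s : ℕ) with hB
  have hYy : ∀ a c : Fin n, Y₀ a c = yF (a : ℕ) (c : ℕ) := by
    intro a c
    rw [hY₀]
    unfold yF
    simp only [Fin.lt_def, Fin.ext_iff]
  have hBY : B * Y₀ = 1 := by
    ext a c
    rw [Matrix.mul_apply]
    have h1 : ∑ t : Fin n, B a t * Y₀ t c
        = ∑ t ∈ Finset.range n, bF (a : ℕ) t * yF t (c : ℕ) := by
      rw [← Fin.sum_univ_eq_sum_range (fun t => bF (a : ℕ) t * yF t (c : ℕ)) n]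
      refine Finset.sum_congr rfl ?_
      intro t _
      rw [hYy]
      rfl
    rw [h1, nat_main n a c a.isLt c.isLt]
    by_cases h : a = c
    · rw [if_pos (by exact_mod_cast congrArg Fin.val h), h, Matrix.one_apply_eq]
    · rw [if_neg (by simpa [Fin.ext_iff] using h), Matrix.one_apply_ne h]
  have hYinv : Y₀⁻¹ = B := Matrix.inv_eq_left_inv hBY
  have hZinv : Z₀⁻¹ = Bᵀ * B := by
    rw [hZ₀, Matrix.mul_inv_rev, ← Matrix.transpose_nonsing_inv, hYinv]
  intro i j hij
  have hijn : (i : ℕ) < (j : ℕ) := hij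
  rw [hZinv, Matrix.mul_apply]
  have hterm : ∀ t : Fin n, Bᵀ i t * B t j = bF (t : ℕ) (i : ℕ) * bF (t : ℕ) (j : ℕ) := by
    intro t; rfl
  calc ∑ t : Fin n, Bᵀ i t * B t j
      = ∑ t : Fin n, bF (t : ℕ) (i : ℕ) * bF (t : ℕ) (j : ℕ) :=
        Finset.sum_congr rfl fun t _ => hterm t
    _ = (∑ t ∈ Finset.univ.filter (fun t : Fin n => j < t),
            bF (t : ℕ) (i : ℕ) * bF (t : ℕ) (j : ℕ))
        + ∑ t ∈ Finset.univ.filter (fun t : Fin n => ¬ j < t),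
            bF (t : ℕ) (i : ℕ) * bF (t : ℕ) (j : ℕ) :=
        (Finset.sum_filter_add_sum_filter_not Finset.univ _ _).symm
    _ = (-1 : ℝ) ^ ((j : ℕ) - (i : ℕ)) *
        ((Nat.fib ((j : ℕ) - (i : ℕ)) : ℝ) +
          ∑ t ∈ Finset.univ.filter (fun t : Fin n => j < t),
            (Nat.fib ((t : ℕ) - (i : ℕ)) : ℝ) * Nat.fib ((t : ℕ) - (j : ℕ))) := by
        have h2 : ∑ t ∈ Finset.univ.filter (fun t : Fin n => ¬ j < t),
            bF (t : ℕ) (i : ℕ) * bF (t : ℕ) (j : ℕ)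
            = (-1 : ℝ) ^ ((j : ℕ) - (i : ℕ)) * Nat.fib ((j : ℕ) - (i : ℕ)) := by
          rw [Finset.sum_eq_single_of_mem j (by simp)]
          · have h3 : bF (j : ℕ) (j : ℕ) = 1 := by simp [bF]
            have h4 : bF (j : ℕ) (i : ℕ)
                = (-1 : ℝ) ^ ((j : ℕ) - (i : ℕ)) * Nat.fib ((j : ℕ) - (i : ℕ)) := by
              unfold bF
              rw [if_neg (by omega), if_neg (by omega)]
            rw [h3, h4, mul_one]
          · intro t ht hne
            simp only [Finset.mem_filter] at ht
            have htj : (t : ℕ) < (j : ℕ) := by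
              rcases ht with ⟨-, ht⟩
              rw [Fin.lt_def] at ht
              have := Fin.val_ne_of_ne hne
              omega
            have : bF (t : ℕ) (j : ℕ) = 0 := by simp [bF, htj]
            rw [this, mul_zero]
        have h1 : ∑ t ∈ Finset.univ.filter (fun t : Fin n => j < t),
            bF (t : ℕ) (i : ℕ) * bF (t : ℕ) (j : ℕ)
            = ∑ t ∈ Finset.univ.filter (fun t : Fin n => j < t),
              (-1 : ℝ) ^ ((j : ℕ) - (i : ℕ)) *
                ((Nat.fib ((t : ℕ) - (i : ℕ)) : ℝ) * Nat.fib ((t : ℕ) - (j : ℕ))) := by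
          refine Finset.sum_congr rfl ?_
          intro t ht
          simp only [Finset.mem_filter] at ht
          have hjt : (j : ℕ) < (t : ℕ) := ht.2
          have hbi : bF (t : ℕ) (i : ℕ)
              = (-1 : ℝ) ^ ((t : ℕ) - (i : ℕ)) * Nat.fib ((t : ℕ) - (i : ℕ)) := by
            unfold bF; rw [if_neg (by omega), if_neg (by omega)]
          have hbj : bF (t : ℕ) (j : ℕ)
              = (-1 : ℝ) ^ ((t : ℕ) - (j : ℕ)) * Nat.fib ((t : ℕ) - (j : ℕ)) := by
            unfold bF; rw [if_neg (by omega), if_neg (by omega)]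
          rw [hbi, hbj]
          have harith : ((t : ℕ) - (i : ℕ)) + ((t : ℕ) - (j : ℕ))
              = ((j : ℕ) - (i : ℕ)) + 2 * ((t : ℕ) - (j : ℕ)) := by omega
          have hsign : ((-1 : ℝ)) ^ ((t : ℕ) - (i : ℕ)) * (-1) ^ ((t : ℕ) - (j : ℕ))
              = (-1) ^ ((j : ℕ) - (i : ℕ)) := by
            rw [← pow_add, harith, pow_add, pow_mul, neg_one_sq, one_pow, mul_one]
          calc (-1 : ℝ) ^ ((t : ℕ) - (i : ℕ)) * (Nat.fib ((t : ℕ) - (i : ℕ)) : ℝ) *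
                ((-1) ^ ((t : ℕ) - (j : ℕ)) * (Nat.fib ((t : ℕ) - (j : ℕ)) : ℝ))
              = ((-1 : ℝ) ^ ((t : ℕ) - (i : ℕ)) * (-1) ^ ((t : ℕ) - (j : ℕ))) *
                ((Nat.fib ((t : ℕ) - (i : ℕ)) : ℝ) * Nat.fib ((t : ℕ) - (j : ℕ))) := by ring
            _ = _ := by rw [hsign]
        rw [h1, h2, ← Finset.mul_sum]
        ring
end

section
/- Let Y_0 and Z_0 = Y_0 Y_0^T be as defined, where (Y_0)_{ij} = 0 if i < j, 1 if i = j, and 1 if i > j with i+j odd, 0 otherwise. Then the sign of (Z_0^{-1})_{ij} is (-1)^{i-j} for all 1 ≤ i, j ≤ n; in particular every diagonal entry of Z_0^{-1} is positive. -/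
/-!
A lower-triangular Toeplitz matrix is determined by its first column, and these matrices multiply
like the power series of their first columns. The first column of `Y₀` is
`1 + X / (1 - X²) = (1 + X - X²) / (1 - X²)`, whose inverse `(1 - X²) / (1 + X - X²)` is the
series of `(-1)^d c_d` with `c_0 = 1` and `c_d = F_d` otherwise, because
`(1 - X²) / (1 - X - X²) = 1 + ∑ F_d X^d`. Hence `(Y₀⁻¹)_{kj} = (-1)^(k+j) c_{k-j}` for `j ≤ k`, and
the `(i, j)` entry of `Z₀⁻¹ = (Y₀⁻¹)ᵀ Y₀⁻¹` is `(-1)^(i+j) ∑_{t ≥ max i j} c_{t-i} c_{t-j}`, a sum of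
positive terms times `(-1)^(i+j)`.
-/

open Matrix PowerSeries

namespace PowerSeries

variable (R : Type*) [CommRing R]

noncomputable def fibSeries : R⟦X⟧ := mk fun d => (Nat.fib d : R)

noncomputable def oddSeries : R⟦X⟧ := mk fun d => if Odd d then 1 else 0

theorem one_sub_X_sub_X_sq_mul_fibSeries : (1 - X - X ^ 2) * fibSeries R = X := by
  ext d
  rcases d with _ | _ | d
  · simp [fibSeries]
  · simp [fibSeries, sub_mul, coeff_X_pow_mul']
  · simp [fibSeries, sub_mul, coeff_X_pow_mul', coeff_X, Nat.fib_add_two]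

theorem one_sub_X_sq_mul_oddSeries : (1 - X ^ 2) * oddSeries R = X := by
  ext d
  rcases d with _ | _ | d
  · simp [oddSeries]
  · simp [oddSeries, sub_mul, coeff_X_pow_mul']
  · simp [oddSeries, sub_mul, coeff_X_pow_mul', coeff_X, Nat.odd_add_one]

theorem one_add_oddSeries_mul_rescale_one_add_fibSeries :
    (1 + oddSeries R) * rescale (-1) (1 + fibSeries R) = 1 := by
  have hodd : (1 - X ^ 2) * (1 + oddSeries R) = 1 + X - X ^ 2 := by
    rw [mul_add, one_sub_X_sq_mul_oddSeries]
    ring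
  have hfib : (1 + X - X ^ 2) * rescale (-1) (1 + fibSeries R) = 1 - X ^ 2 := by
    have h : (1 + X - X ^ 2) * rescale (-1) (fibSeries R) = -X := by
      have := congrArg (rescale (-1 : R)) (one_sub_X_sub_X_sq_mul_fibSeries R)
      rwa [map_mul, map_sub, map_sub, map_one, map_pow, rescale_neg_one_X, neg_sq,
        sub_neg_eq_add] at this
    rw [map_add, map_one, mul_add, h]
    ring
  have hunit : IsUnit ((1 - X ^ 2) * (1 + X - X ^ 2) : R⟦X⟧) := by
    rw [isUnit_iff_constantCoeff]
    simp
  refine hunit.mul_left_cancel ?_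
  calc (1 - X ^ 2) * (1 + X - X ^ 2) * ((1 + oddSeries R) * rescale (-1) (1 + fibSeries R))
      = ((1 - X ^ 2) * (1 + oddSeries R)) * ((1 + X - X ^ 2) * rescale (-1) (1 + fibSeries R)) := by
        ring
    _ = (1 - X ^ 2) * (1 + X - X ^ 2) * 1 := by
        rw [hodd, hfib]
        ring

theorem coeff_one_add_fibSeries_pos [PartialOrder R] [IsStrictOrderedRing R] (d : ℕ) :
    0 < coeff d (1 + fibSeries R) := by
  rcases d with _ | d
  · simp [fibSeries]
  · simp [fibSeries, coeff_one, Nat.fib_pos.mpr d.succ_pos]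

end PowerSeries

namespace Matrix

noncomputable def lowerToeplitz {R : Type*} [Semiring R] (n : ℕ) (f : R⟦X⟧) :
    Matrix (Fin n) (Fin n) R :=
  of fun i j => if j ≤ i then coeff ((i : ℕ) - j) f else 0

section Semiring

variable {R : Type*} [Semiring R] {n : ℕ}

theorem lowerToeplitz_apply (f : R⟦X⟧) (i j : Fin n) :
    lowerToeplitz n f i j = if j ≤ i then coeff ((i : ℕ) - j) f else 0 :=
  rfl

@[simp]
theorem lowerToeplitz_one : lowerToeplitz n (1 : R⟦X⟧) = 1 := by
  ext i j
  simp only [lowerToeplitz_apply, coeff_one, one_apply, Fin.ext_iff, Fin.le_def]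
  split_ifs <;> first | rfl | (exfalso; omega)

theorem lowerToeplitz_mul (f g : R⟦X⟧) :
    lowerToeplitz n (f * g) = lowerToeplitz n f * lowerToeplitz n g := by
  ext i j
  simp only [mul_apply, lowerToeplitz_apply, mul_ite, ite_mul, zero_mul, mul_zero]
  split_ifs with hji
  · rw [Fin.le_def] at hji
    rw [coeff_mul, ← Finset.sum_filter, ← Finset.sum_filter]
    -- `k ↦ (i - k, k - j)` matches the `k` with `j ≤ k ≤ i` with the antidiagonal of `i - j`
    refine Finset.sum_bij' (fun p hp => ⟨j + p.2, ?_⟩) (fun k _ => ((i : ℕ) - k, (k : ℕ) - j))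
      ?_ ?_ ?_ ?_ ?_
    · rw [Finset.HasAntidiagonal.mem_antidiagonal] at hp
      omega
    all_goals
      simp only [Finset.HasAntidiagonal.mem_antidiagonal, Finset.mem_filter, Finset.mem_univ,
        true_and, Fin.le_def, Fin.ext_iff, Prod.ext_iff]
      intro a ha
    · omega
    · omega
    · omega
    · omega
    · rw [show (i : ℕ) - (j + a.2) = a.1 by omega, Nat.add_sub_cancel_left]
  · refine (Finset.sum_eq_zero fun k _ => ?_).symm
    split_ifs <;> first | rfl | exact absurd (le_trans ‹j ≤ _› ‹_ ≤ i›) hji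

theorem lowerToeplitz_nonneg [PartialOrder R] {f : R⟦X⟧} (hf : ∀ d, 0 ≤ coeff d f)
    (i j : Fin n) : 0 ≤ lowerToeplitz n f i j := by
  rw [lowerToeplitz_apply]
  split_ifs
  exacts [hf _, le_rfl]

theorem lowerToeplitz_pos [PartialOrder R] {f : R⟦X⟧} (hf : ∀ d, 0 < coeff d f) {i j : Fin n}
    (hji : j ≤ i) : 0 < lowerToeplitz n f i j := by
  rw [lowerToeplitz_apply, if_pos hji]
  exact hf _

end Semiring

section CommRing

variable {R : Type*} [CommRing R] {n : ℕ}

theorem lowerToeplitz_one_add_oddSeries_apply (i j : Fin n) :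
    lowerToeplitz n (1 + oddSeries R) i j =
      if i < j then 0 else if i = j then 1 else if (i : ℕ) % 2 ≠ (j : ℕ) % 2 then 1 else 0 := by
  rw [lowerToeplitz_apply, map_add, coeff_one]
  simp only [oddSeries, coeff_mk, Nat.odd_iff, Fin.lt_def, Fin.le_def, Fin.ext_iff]
  split_ifs <;> first | (exfalso; omega) | simp

theorem lowerToeplitz_rescale_neg_one_apply (f : R⟦X⟧) (i j : Fin n) :
    lowerToeplitz n (rescale (-1) f) i j = (-1) ^ ((i : ℕ) + j) * lowerToeplitz n f i j := by
  simp only [lowerToeplitz_apply, coeff_rescale, mul_ite, mul_zero]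
  split_ifs with hji
  swap; · rfl
  obtain ⟨e, he⟩ := Nat.exists_eq_add_of_le (Fin.le_def.mp hji)
  rw [he, Nat.add_sub_cancel_left, show (j : ℕ) + e + j = 2 * j + e by ring, pow_add, pow_mul,
    neg_one_sq, one_pow, one_mul]

theorem transpose_mul_self_apply_of_checkerboard {m : ℕ} {A B : Matrix (Fin m) (Fin n) R}
    (hB : ∀ k j, B k j = (-1) ^ ((k : ℕ) + j) * A k j) (i j : Fin n) :
    (Bᵀ * B) i j = (-1) ^ ((i : ℕ) + j) * (Aᵀ * A) i j := by
  simp only [mul_apply, transpose_apply, hB, Finset.mul_sum]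
  refine Finset.sum_congr rfl fun k _ => ?_
  have hsign : (-1 : R) ^ ((k : ℕ) + i) * (-1) ^ ((k : ℕ) + j) = (-1) ^ ((i : ℕ) + j) := by
    rw [← pow_add, show (k : ℕ) + i + (k + j) = 2 * k + (i + j) by ring, pow_add, pow_mul,
      neg_one_sq, one_pow, one_mul]
  rw [← hsign]
  ring

end CommRing

theorem transpose_mul_self_apply_pos {R : Type*} [CommSemiring R] [PartialOrder R]
    [IsStrictOrderedRing R] {l m : Type*} [Fintype l] {A : Matrix l m R}
    (hA : ∀ k j, 0 ≤ A k j) {k : l} {i j : m} (hi : 0 < A k i) (hj : 0 < A k j) :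
    0 < (Aᵀ * A) i j := by
  rw [mul_apply]
  exact Finset.sum_pos' (fun t _ => mul_nonneg (hA t i) (hA t j))
    ⟨k, Finset.mem_univ _, mul_pos hi hj⟩

end Matrix

theorem Real.sign_neg_one_pow_mul {x : ℝ} (hx : 0 < x) (k : ℕ) :
    Real.sign ((-1) ^ k * x) = (-1) ^ k := by
  rcases Nat.even_or_odd k with hk | hk
  · rw [hk.neg_one_pow, one_mul, Real.sign_of_pos hx]
  · rw [hk.neg_one_pow, neg_one_mul, Real.sign_of_neg (neg_neg_of_pos hx)]

/-- The sign of `(Z₀⁻¹)_{ij}` is `(-1)^{i-j}`; in particular the diagonal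
entries of `Z₀⁻¹` are positive. -/
theorem stmt_9 (n : ℕ)
    (Y₀ : Matrix (Fin n) (Fin n) ℝ)
    (hY₀ : ∀ i j : Fin n, Y₀ i j =
      if i < j then 0 else if i = j then 1 else
        if (i : ℕ) % 2 ≠ (j : ℕ) % 2 then 1 else 0)
    (Z₀ : Matrix (Fin n) (Fin n) ℝ) (hZ₀ : Z₀ = Y₀ * Y₀ᵀ) :
    (∀ i j : Fin n, Real.sign (Z₀⁻¹ i j) = (-1 : ℝ) ^ ((i : ℕ) + (j : ℕ))) ∧
    (∀ i : Fin n, 0 < Z₀⁻¹ i i) := by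
  set A := lowerToeplitz n (1 + fibSeries ℝ)
  have hY : Y₀ = lowerToeplitz n (1 + oddSeries ℝ) :=
    ext fun i j => (hY₀ i j).trans (lowerToeplitz_one_add_oddSeries_apply i j).symm
  have hYinv : Y₀⁻¹ = lowerToeplitz n (rescale (-1) (1 + fibSeries ℝ)) := by
    refine inv_eq_right_inv ?_
    rw [hY, ← lowerToeplitz_mul, one_add_oddSeries_mul_rescale_one_add_fibSeries,
      lowerToeplitz_one]
  have hZinv : ∀ i j, Z₀⁻¹ i j = (-1) ^ ((i : ℕ) + j) * (Aᵀ * A) i j := by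
    rw [hZ₀, Matrix.mul_inv_rev, ← transpose_nonsing_inv, hYinv]
    exact transpose_mul_self_apply_of_checkerboard (lowerToeplitz_rescale_neg_one_apply _)
  have hA := coeff_one_add_fibSeries_pos ℝ
  have hpos : ∀ i j, 0 < (Aᵀ * A) i j := fun i j =>
    transpose_mul_self_apply_pos (lowerToeplitz_nonneg fun d => (hA d).le)
      (lowerToeplitz_pos hA (le_max_left i j)) (lowerToeplitz_pos hA (le_max_right i j))
  refine ⟨fun i j => ?_, fun i => ?_⟩
  · rw [hZinv]
    exact Real.sign_neg_one_pow_mul (hpos i j) _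
  · rw [hZinv, ← two_mul, pow_mul, neg_one_sq, one_pow, one_mul]
    exact hpos i i
end

section
/- Let Z_0 = Y_0 Y_0^T where Y_0 is the n×n matrix with (Y_0)_{ij} = 0 if i < j, 1 if i = j, and 1 if i > j with i+j odd, 0 otherwise. Then the matrices Z_0^{-1} and |Z_0^{-1}| (entrywise absolute value) have the same characteristic polynomial. -/
open Matrix Polynomial Finset

/-- Conjugation by an involution preserves the characteristic polynomial. -/
lemma aux_charpoly_conj {n : ℕ} (D A : Matrix (Fin n) (Fin n) ℝ)
    (hD : D * D = 1) : (D * A * D).charpoly = A.charpoly := by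
  classical
  let f : Matrix (Fin n) (Fin n) ℝ →+* Matrix (Fin n) (Fin n) ℝ[X] :=
    (C : ℝ →+* ℝ[X]).mapMatrix
  have hD' : f D * f D = 1 := by rw [← _root_.map_mul, hD, _root_.map_one]
  have hcomm : Commute (Matrix.scalar (Fin n) (X : ℝ[X])) (f D) :=
    Matrix.scalar_commute (X : ℝ[X]) (fun r' => Commute.all _ _) (f D)
  have key : charmatrix (D * A * D) = f D * charmatrix A * f D := by
    unfold charmatrix
    show Matrix.scalar (Fin n) (X : ℝ[X]) - f (D * A * D)
        = f D * (Matrix.scalar (Fin n) (X : ℝ[X]) - f A) * f D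
    rw [_root_.map_mul, _root_.map_mul, Matrix.mul_sub, Matrix.sub_mul]
    congr 1
    rw [← hcomm.eq, mul_assoc, hD', mul_one]
  have hdet : (f D).det * (f D).det = 1 := by
    rw [← Matrix.det_mul, hD', Matrix.det_one]
  rw [Matrix.charpoly, Matrix.charpoly, key, Matrix.det_mul, Matrix.det_mul,
    mul_comm ((f D).det), mul_assoc, hdet, mul_one]

/-- If a matrix vanishes on and above the diagonal then its `k`-th power
vanishes at `(i,j)` whenever `i < j + k`. -/
lemma aux_strictLower_pow {n : ℕ} (M : Matrix (Fin n) (Fin n) ℝ)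
    (hM : ∀ i j : Fin n, (i : ℕ) ≤ j → M i j = 0) :
    ∀ (k : ℕ) (i j : Fin n), (i : ℕ) < (j : ℕ) + k → (M ^ k) i j = 0 := by
  intro k
  induction k with
  | zero =>
    intro i j hij
    simp only [pow_zero, Matrix.one_apply]
    rw [if_neg]
    rintro rfl; omega
  | succ k ih =>
    intro i j hij
    rw [pow_succ, Matrix.mul_apply]
    apply Finset.sum_eq_zero
    intro l _
    by_cases hl : (l : ℕ) ≤ (j : ℕ)
    · rw [hM l j hl, mul_zero]
    · rw [ih i l (by omega), zero_mul]

/-- `Z₀⁻¹` and its entrywise absolute value have the same characteristic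
polynomial. -/
theorem stmt_10 (n : ℕ)
    (Y₀ : Matrix (Fin n) (Fin n) ℝ)
    (hY₀ : ∀ i j : Fin n, Y₀ i j =
      if i < j then 0 else if i = j then 1 else
        if (i : ℕ) % 2 ≠ (j : ℕ) % 2 then 1 else 0)
    (Z₀ : Matrix (Fin n) (Fin n) ℝ) (hZ₀ : Z₀ = Y₀ * Y₀ᵀ) :
    (Z₀⁻¹).charpoly = (Matrix.of fun i j => |Z₀⁻¹ i j|).charpoly := by
  classical
  set D : Matrix (Fin n) (Fin n) ℝ := Matrix.diagonal (fun i => (-1 : ℝ) ^ (i : ℕ)) with hD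
  have hDD : D * D = 1 := by
    rw [hD, Matrix.diagonal_mul_diagonal]
    have h1 : (fun i : Fin n => (-1 : ℝ) ^ (i : ℕ) * (-1 : ℝ) ^ (i : ℕ)) = fun _ => 1 := by
      funext i
      rw [← pow_add]
      exact Even.neg_one_pow ⟨(i : ℕ), rfl⟩
    rw [h1, Matrix.diagonal_one]
  have hDt : Dᵀ = D := Matrix.diagonal_transpose _
  have hDinv : D⁻¹ = D := Matrix.inv_eq_right_inv hDD
  set W : Matrix (Fin n) (Fin n) ℝ := D * Y₀ * D with hW
  set M : Matrix (Fin n) (Fin n) ℝ := 1 - W with hM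
  have hWapp : ∀ i j : Fin n, W i j = (-1 : ℝ) ^ (i : ℕ) * Y₀ i j * (-1 : ℝ) ^ (j : ℕ) := by
    intro i j
    rw [hW, Matrix.mul_diagonal, Matrix.diagonal_mul]
  have hMapp : ∀ i j : Fin n,
      M i j = if (j : ℕ) < (i : ℕ) ∧ (i : ℕ) % 2 ≠ (j : ℕ) % 2 then 1 else 0 := by
    intro i j
    rw [hM, Matrix.sub_apply, hWapp, hY₀]
    rcases lt_trichotomy i j with h | h | h
    · have hij : (i : ℕ) < (j : ℕ) := h
      rw [if_pos h, if_neg (by omega), Matrix.one_apply_ne (Fin.ne_of_lt h)]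
      ring
    · subst h
      rw [if_neg (lt_irrefl _), if_pos rfl, if_neg (by omega), Matrix.one_apply_eq]
      have h1 : (-1 : ℝ) ^ (i : ℕ) * 1 * (-1 : ℝ) ^ (i : ℕ) = 1 := by
        rw [mul_one, ← pow_add]
        exact Even.neg_one_pow ⟨(i : ℕ), rfl⟩
      rw [h1]; ring
    · have h1 : ¬ i < j := not_lt_of_gt h
      have h2 : i ≠ j := (Fin.ne_of_lt h).symm
      have hji : (j : ℕ) < (i : ℕ) := h
      rw [if_neg h1, if_neg h2, Matrix.one_apply_ne h2]
      by_cases hpar : (i : ℕ) % 2 ≠ (j : ℕ) % 2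
      · rw [if_pos hpar, if_pos ⟨hji, hpar⟩]
        have hodd : Odd ((i : ℕ) + (j : ℕ)) := by rw [Nat.odd_iff]; omega
        have h3 : (-1 : ℝ) ^ (i : ℕ) * 1 * (-1 : ℝ) ^ (j : ℕ) = -1 := by
          rw [mul_one, ← pow_add, Odd.neg_one_pow hodd]
        rw [h3]; ring
      · rw [if_neg hpar, if_neg (by tauto)]
        ring
  have hMnonneg : ∀ i j : Fin n, 0 ≤ M i j := by
    intro i j; rw [hMapp]; split <;> norm_num
  have hMstrict : ∀ i j : Fin n, (i : ℕ) ≤ (j : ℕ) → M i j = 0 := by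
    intro i j hij; rw [hMapp, if_neg (by omega)]
  have hMn : M ^ n = 0 := by
    ext i j
    rw [aux_strictLower_pow M hMstrict n i j (by omega)]
    rfl
  have hpow : ∀ (k : ℕ) (i j : Fin n), 0 ≤ (M ^ k) i j := by
    intro k
    induction k with
    | zero =>
      intro i j
      rw [pow_zero, Matrix.one_apply]
      split <;> norm_num
    | succ m ihm =>
      intro i j
      rw [pow_succ, Matrix.mul_apply]
      exact Finset.sum_nonneg fun l _ => mul_nonneg (ihm i l) (hMnonneg l j)
  set S : Matrix (Fin n) (Fin n) ℝ := ∑ k ∈ range n, M ^ k with hS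
  have hWS : W * S = 1 := by
    have h1 : W = 1 - M := by rw [hM, sub_sub_cancel]
    rw [h1, hS, mul_neg_geom_sum, hMn, sub_zero]
  have hSnonneg : ∀ i j : Fin n, 0 ≤ S i j := by
    intro i j
    rw [hS]
    have h1 : (∑ k ∈ range n, M ^ k) i j = ∑ k ∈ range n, (M ^ k) i j := by
      simp [Matrix.sum_apply]
    rw [h1]
    exact Finset.sum_nonneg fun k _ => hpow k i j
  have hWinv : W⁻¹ = S := Matrix.inv_eq_right_inv hWS
  have hDZD : D * Z₀ * D = W * Wᵀ := by
    rw [hZ₀, hW, Matrix.transpose_mul, Matrix.transpose_mul, hDt]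
    simp only [Matrix.mul_assoc]
    rw [← Matrix.mul_assoc D D, hDD, Matrix.one_mul]
  have hconj : D * Z₀⁻¹ * D = Sᵀ * S := by
    have h1 : (D * Z₀ * D)⁻¹ = D⁻¹ * Z₀⁻¹ * D⁻¹ := by
      rw [Matrix.mul_inv_rev, Matrix.mul_inv_rev, mul_assoc]
    have h2 : (W * Wᵀ)⁻¹ = (Wᵀ)⁻¹ * W⁻¹ := Matrix.mul_inv_rev _ _
    have h3 : (Wᵀ)⁻¹ = Sᵀ := by rw [← Matrix.transpose_nonsing_inv, hWinv]
    rw [← hDinv, ← h1, hDZD, h2, h3, hWinv]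
  have hnonneg : ∀ i j : Fin n, 0 ≤ (D * Z₀⁻¹ * D) i j := by
    intro i j
    rw [hconj, Matrix.mul_apply]
    exact Finset.sum_nonneg fun l _ =>
      mul_nonneg (hSnonneg l i) (hSnonneg l j)
  have habs : (Matrix.of fun i j => |Z₀⁻¹ i j|) = D * Z₀⁻¹ * D := by
    ext i j
    have happ : (D * Z₀⁻¹ * D) i j = (-1 : ℝ) ^ (i : ℕ) * Z₀⁻¹ i j * (-1 : ℝ) ^ (j : ℕ) := by
      rw [hD, Matrix.mul_diagonal, Matrix.diagonal_mul]
    have h0 : 0 ≤ (-1 : ℝ) ^ (i : ℕ) * Z₀⁻¹ i j * (-1 : ℝ) ^ (j : ℕ) := by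
      rw [← happ]; exact hnonneg i j
    have h1 : |Z₀⁻¹ i j| = |(-1 : ℝ) ^ (i : ℕ) * Z₀⁻¹ i j * (-1 : ℝ) ^ (j : ℕ)| := by
      rw [abs_mul, abs_mul, abs_pow, abs_pow, abs_neg, abs_one, one_pow, one_pow,
        mul_one, one_mul]
    simp only [Matrix.of_apply]
    rw [h1, abs_of_nonneg h0, happ]
  rw [habs, aux_charpoly_conj D Z₀⁻¹ hDD]
end

section
/- Let K_n be the set of n×n lower triangular (0,1)-matrices with unit diagonal and L_n = {YY^T : Y ∈ K_n}. Let Z_0 = Y_0 Y_0^T where (Y_0)_{ij} = 0 if i < j, 1 if i = j, 1 if i > j with i+j odd, 0 otherwise. Then for every Z ∈ L_n, the smallest eigenvalue of Z_0 is less than or equal to the smallest eigenvalue of Z. Equivalently, c_n := min_{Z ∈ L_n} λ_min(Z) equals the smallest eigenvalue of Z_0. -/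
/-!
Let `F` be the Fibonacci sequence with `F 0` replaced by `1`. For `X = Y⁻¹`, row `i` of `Y X = 1`
reads `X i j = -∑_{j ≤ k < i} Y i k X k j` with coefficients in `[0, 1]`; tracking the positive
and negative parts of column `j` separately shows that both grow at most like `F`, so
`|X i j| ≤ F (i - j)`. For `Y₀` the coefficients are fixed by parity, and the bound is attained
with a checkerboard sign pattern: `Y₀⁻¹ i j = (-1)^(i - j) F (i - j)`.

If now `Y Yᵀ v = μ v` and `w = Yᵀ v`, the vector `x = Y₀⁻ᵀ ((-1)^k |w k|)_k` has
`|x l| = ∑_k |Y₀⁻¹ k l| |w k| ≥ |v l|` and `Y₀ᵀ x = ((-1)^k |w k|)_k`, hence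
`λ_min(Y₀ Y₀ᵀ) |v|² ≤ λ_min(Y₀ Y₀ᵀ) |x|² ≤ xᵀ Y₀ Y₀ᵀ x = |w|² = μ |v|²`.
-/

open Finset Matrix

def fibOne (m : ℕ) : ℕ := if m = 0 then 1 else Nat.fib m

lemma mul_le_max_zero_of_mem_Icc {c x : ℝ} (hc : c ∈ Set.Icc (0 : ℝ) 1) :
    c * x ≤ max x 0 := by
  rcases le_total 0 x with hx | hx
  · exact (mul_le_of_le_one_left hx hc.2).trans (le_max_left _ _)
  · exact (mul_nonpos_of_nonneg_of_nonpos hc.1 hx).trans (le_max_right _ _)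

theorem abs_le_fibOne_of_eq_neg_sum (a : ℕ → ℝ) (c : ℕ → ℕ → ℝ)
    (hc : ∀ m k, c m k ∈ Set.Icc (0 : ℝ) 1) (h0 : a 0 = 1)
    (hrec : ∀ m, 0 < m → a m = -∑ k ∈ range m, c m k * a k) (m : ℕ) :
    |a m| ≤ fibOne m := by
  set P : ℕ → ℝ := fun m => ∑ k ∈ range m, max (a k) 0
  set N : ℕ → ℝ := fun m => ∑ k ∈ range m, max (-a k) 0
  have hbound : ∀ m, 0 < m → -P m ≤ a m ∧ a m ≤ N m := by
    intro m hm
    have hP := sum_le_sum fun k (_ : k ∈ range m) =>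
      mul_le_max_zero_of_mem_Icc (x := a k) (hc m k)
    have hN := sum_le_sum fun k (_ : k ∈ range m) =>
      mul_le_max_zero_of_mem_Icc (x := -a k) (hc m k)
    simp only [mul_neg, sum_neg_distrib] at hN
    rw [hrec m hm]
    constructor <;> linarith
  have hfib : ∀ m, 0 < m →
      P m ≤ Nat.fib m ∧ N m ≤ Nat.fib m ∧ P m + N m ≤ Nat.fib (m + 1) := by
    intro m hm
    induction m, hm using Nat.le_induction with
    | base => simp [P, N, h0]
    | succ m hm ih =>
      obtain ⟨hlo, hhi⟩ := hbound m hm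
      have hPs : P (m + 1) = P m + max (a m) 0 := sum_range_succ _ _
      have hNs : N (m + 1) = N m + max (-a m) 0 := sum_range_succ _ _
      have hmono : (Nat.fib m : ℝ) ≤ Nat.fib (m + 1) := by exact_mod_cast Nat.fib_le_fib_succ
      have hadd : (Nat.fib (m + 2) : ℝ) = Nat.fib m + Nat.fib (m + 1) := by
        exact_mod_cast Nat.fib_add_two
      rw [hPs, hNs, hadd]
      rcases le_total 0 (a m) with ha | ha
      · rw [max_eq_left ha, max_eq_right (neg_nonpos.2 ha)]
        refine ⟨?_, ?_, ?_⟩ <;> linarith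
      · rw [max_eq_right ha, max_eq_left (neg_nonneg.2 ha)]
        refine ⟨?_, ?_, ?_⟩ <;> linarith
  rcases Nat.eq_zero_or_pos m with rfl | hm
  · simp [h0, fibOne]
  obtain ⟨hlo, hhi⟩ := hbound m hm
  obtain ⟨hP, hN, -⟩ := hfib m hm
  rw [fibOne, if_neg hm.ne', abs_le]
  constructor <;> linarith

theorem sum_range_fibOne_of_parity_ne {m : ℕ} (hm : 0 < m) :
    ∑ k ∈ range m, (if k % 2 = m % 2 then 0 else fibOne k) = Nat.fib m := by
  induction m using Nat.twoStepInduction with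
  | zero => exact absurd hm (lt_irrefl 0)
  | one => rfl
  | more m ih _ =>
    rcases Nat.eq_zero_or_pos m with rfl | hm
    · rfl
    rw [sum_range_succ, sum_range_succ, Nat.add_mod_right, ih hm, if_pos rfl, if_neg (by omega),
      fibOne, if_neg m.succ_ne_zero, Nat.fib_add_two, add_zero]

lemma neg_one_pow_eq_neg_of_mod_two_ne {k m : ℕ} (h : k % 2 ≠ m % 2) :
    (-1 : ℝ) ^ k = -(-1) ^ m := by
  simp only [neg_one_pow_eq_ite, Nat.even_iff]
  split_ifs <;> first | omega | norm_num

theorem eq_neg_one_pow_mul_fibOne_of_eq_neg_sum (a : ℕ → ℝ) (N : ℕ) (h0 : a 0 = 1)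
    (hrec : ∀ m, 0 < m → m < N →
      a m = -∑ k ∈ range m, (if k % 2 = m % 2 then 0 else 1) * a k) :
    ∀ m < N, a m = (-1) ^ m * fibOne m := by
  intro m
  induction m using Nat.strong_induction_on with
  | _ m ih =>
  intro hmN
  rcases Nat.eq_zero_or_pos m with rfl | hm
  · simp [h0, fibOne]
  have hterm : ∀ k ∈ range m, (if k % 2 = m % 2 then 0 else 1) * a k =
      -(-1) ^ m * ((if k % 2 = m % 2 then 0 else fibOne k : ℕ) : ℝ) := by
    intro k hk
    have hk := mem_range.1 hk
    split_ifs with hkm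
    · simp
    · rw [ih k hk (hk.trans hmN), neg_one_pow_eq_neg_of_mod_two_ne hkm]
      ring
  rw [hrec m hm hmN, sum_congr rfl hterm, ← mul_sum, ← Nat.cast_sum,
    sum_range_fibOne_of_parity_ne hm, fibOne, if_neg hm.ne']
  ring

namespace Matrix

variable {n : ℕ}

def extendByZero (A : Matrix (Fin n) (Fin n) ℝ) (i k : ℕ) : ℝ :=
  if h : i < n ∧ k < n then A ⟨i, h.1⟩ ⟨k, h.2⟩ else 0

@[simp]
lemma extendByZero_val (A : Matrix (Fin n) (Fin n) ℝ) (i k : Fin n) :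
    A.extendByZero i k = A i k := by
  simp [extendByZero]

lemma extendByZero_of_le_left (A : Matrix (Fin n) (Fin n) ℝ) {i : ℕ} (hi : n ≤ i) (k : ℕ) :
    A.extendByZero i k = 0 :=
  dif_neg fun h => (h.1.trans_le hi).false

lemma IsLowerTriangular.extendByZero_of_lt {A : Matrix (Fin n) (Fin n) ℝ}
    (hA : A.IsLowerTriangular) {i k : ℕ} (hik : i < k) : A.extendByZero i k = 0 := by
  unfold extendByZero
  split_ifs with h
  · exact hA (show (⟨i, h.1⟩ : Fin n) < ⟨k, h.2⟩ from hik)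
  · rfl

lemma extendByZero_self {A : Matrix (Fin n) (Fin n) ℝ} (hA : ∀ i, A i i = 1) {i : ℕ}
    (hi : i < n) : A.extendByZero i i = 1 :=
  (dif_pos ⟨hi, hi⟩).trans (hA _)

lemma IsLowerTriangular.det_eq_one {Y : Matrix (Fin n) (Fin n) ℝ} (hlow : Y.IsLowerTriangular)
    (hdiag : ∀ i, Y i i = 1) : Y.det = 1 := by
  simp [det_of_isLowerTriangular Y hlow, hdiag]

lemma IsLowerTriangular.inv {Y : Matrix (Fin n) (Fin n) ℝ} (hlow : Y.IsLowerTriangular)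
    (hdiag : ∀ i, Y i i = 1) : Y⁻¹.IsLowerTriangular :=
  have := Y.invertibleOfIsUnitDet (by simp [hlow.det_eq_one hdiag])
  blockTriangular_inv_of_blockTriangular hlow

lemma IsLowerTriangular.mul_inv_eq_one {Y : Matrix (Fin n) (Fin n) ℝ}
    (hlow : Y.IsLowerTriangular) (hdiag : ∀ i, Y i i = 1) : Y * Y⁻¹ = 1 :=
  mul_nonsing_inv Y (by simp [hlow.det_eq_one hdiag])

lemma IsLowerTriangular.inv_apply_self {Y : Matrix (Fin n) (Fin n) ℝ}
    (hlow : Y.IsLowerTriangular) (hdiag : ∀ i, Y i i = 1) (i : Fin n) : Y⁻¹ i i = 1 := by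
  have := congr_fun₂ (hlow.mul_inv_eq_one hdiag) i i
  rwa [mul_apply, sum_eq_single i (fun k _ hk => ?_) (by simp), hdiag, one_mul,
    one_apply_eq] at this
  rcases hk.lt_or_gt with hki | hik
  · rw [hlow.inv hdiag hki, mul_zero]
  · rw [hlow hik, zero_mul]

theorem extendByZero_eq_neg_sum_of_mul_eq_one {Y X : Matrix (Fin n) (Fin n) ℝ} (hYX : Y * X = 1)
    (hYlow : Y.IsLowerTriangular) (hYdiag : ∀ i, Y i i = 1) (hXlow : X.IsLowerTriangular)
    (j : ℕ) {m : ℕ} (hm : 0 < m) :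
    X.extendByZero (j + m) j =
      -∑ k ∈ range m, Y.extendByZero (j + m) (j + k) * X.extendByZero (j + k) j := by
  by_cases hjm : j + m < n
  swap
  · simp [extendByZero_of_le_left _ (not_lt.1 hjm)]
  set F : ℕ → ℝ := fun k => Y.extendByZero (j + m) k * X.extendByZero k j
  have hrow : ∑ k ∈ range n, F k = 0 := by
    have := congr_fun₂ hYX ⟨j + m, hjm⟩ ⟨j, by omega⟩
    rw [mul_apply, one_apply_ne (by simp [Fin.ext_iff]; omega)] at this
    rw [← this, ← Fin.sum_univ_eq_sum_range]
    simp [F, extendByZero, hjm, show j < n by omega]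
  rw [eventually_constant_sum (N := j + (m + 1))
      (fun k hk => by simp [F, hYlow.extendByZero_of_lt (show j + m < k by omega)]) (by omega),
    sum_range_add, sum_range_succ,
    sum_eq_zero fun k hk => by simp [F, hXlow.extendByZero_of_lt (mem_range.1 hk)]] at hrow
  simp only [F, extendByZero_self hYdiag hjm, one_mul, zero_add] at hrow
  linarith

theorem abs_inv_apply_le_fibOne {Y : Matrix (Fin n) (Fin n) ℝ} (hlow : Y.IsLowerTriangular)
    (h01 : ∀ i j, Y i j = 0 ∨ Y i j = 1) (hdiag : ∀ i, Y i i = 1) (i j : Fin n) :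
    |Y⁻¹ i j| ≤ fibOne (i - j : ℕ) := by
  rcases lt_or_ge i j with hij | hji
  · rw [hlow.inv hdiag hij, abs_zero]
    positivity
  have h01' : ∀ i k, Y.extendByZero i k ∈ Set.Icc (0 : ℝ) 1 := by
    intro i k
    unfold extendByZero
    split_ifs with h
    · rcases h01 ⟨i, h.1⟩ ⟨k, h.2⟩ with h | h <;> simp [h]
    · simp
  have := abs_le_fibOne_of_eq_neg_sum (fun m => Y⁻¹.extendByZero (j + m) j) _
    (fun m k => h01' (j + m) (j + k)) (by simpa using hlow.inv_apply_self hdiag j)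
    (fun m hm => extendByZero_eq_neg_sum_of_mul_eq_one
      (hlow.mul_inv_eq_one hdiag) hlow hdiag (hlow.inv hdiag) j hm)
    (i - j)
  rwa [Nat.add_sub_cancel' (Fin.le_def.1 hji), extendByZero_val] at this

end Matrix

def parityMatrix (n : ℕ) : Matrix (Fin n) (Fin n) ℝ :=
  of fun i j =>
    if i < j then 0 else if i = j then 1 else if (i : ℕ) % 2 ≠ (j : ℕ) % 2 then 1 else 0

lemma parityMatrix_isLowerTriangular (n : ℕ) : (parityMatrix n).IsLowerTriangular :=
  fun i j h => if_pos (show i < j from h)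

lemma parityMatrix_apply_self {n : ℕ} (i : Fin n) : parityMatrix n i i = 1 := by
  simp [parityMatrix]

lemma parityMatrix_extendByZero {n j m k : ℕ} (hkm : k < m) (hjm : j + m < n) :
    (parityMatrix n).extendByZero (j + m) (j + k) = if k % 2 = m % 2 then 0 else 1 := by
  simp only [extendByZero, hjm, show j + k < n by omega, and_self, dif_pos, parityMatrix, of_apply,
    Fin.mk_lt_mk, Fin.mk.injEq]
  split_ifs <;> first | rfl | omega

theorem inv_parityMatrix_apply_of_le {n : ℕ} {i j : Fin n} (hji : j ≤ i) :
    (parityMatrix n)⁻¹ i j = (-1) ^ (i - j : ℕ) * fibOne (i - j : ℕ) := by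
  have hlow := parityMatrix_isLowerTriangular n
  have hdiag := parityMatrix_apply_self (n := n)
  have := eq_neg_one_pow_mul_fibOne_of_eq_neg_sum
    (fun m => (parityMatrix n)⁻¹.extendByZero (j + m) j) (n - j)
    (by simpa using hlow.inv_apply_self hdiag j)
    (fun m hm hmN => by
      rw [extendByZero_eq_neg_sum_of_mul_eq_one (hlow.mul_inv_eq_one hdiag) hlow hdiag
        (hlow.inv hdiag) j hm]
      congr 1
      exact sum_congr rfl fun k hk => by
        rw [parityMatrix_extendByZero (mem_range.1 hk) (by omega)])
    (i - j) (by omega)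
  rwa [Nat.add_sub_cancel' (Fin.le_def.1 hji), extendByZero_val] at this

namespace Matrix

variable {ι : Type*} [Fintype ι]

lemma exists_mulVec_eq_smul_of_mem_spectrum [DecidableEq ι] {M : Matrix ι ι ℝ} {μ : ℝ}
    (h : μ ∈ spectrum ℝ M) : ∃ v ≠ 0, M *ᵥ v = μ • v := by
  rw [← spectrum_toLin', ← Module.End.hasEigenvalue_iff_mem_spectrum] at h
  obtain ⟨v, hv⟩ := h.exists_hasEigenvector
  exact ⟨v, hv.2, by simpa using hv.apply_eq_smul⟩

open scoped MatrixOrder in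
lemma IsHermitian.mul_dotProduct_self_le [DecidableEq ι] {M : Matrix ι ι ℝ} (hM : M.IsHermitian)
    {lam : ℝ} (hlam : ∀ μ ∈ spectrum ℝ M, lam ≤ μ) (x : ι → ℝ) :
    lam * (x ⬝ᵥ x) ≤ x ⬝ᵥ M *ᵥ x := by
  have h : algebraMap ℝ _ lam ≤ M := (algebraMap_le_iff_le_spectrum hM.isSelfAdjoint).2 hlam
  simpa [Algebra.algebraMap_eq_smul_one, sub_mulVec, dotProduct_sub, smul_mulVec] using
    (le_iff.1 h).dotProduct_mulVec_nonneg x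

lemma dotProduct_mul_transpose_mulVec {κ R : Type*} [Fintype κ] [CommSemiring R]
    (A : Matrix ι κ R) (x : ι → R) : x ⬝ᵥ (A * Aᵀ) *ᵥ x = (x ᵥ* A) ⬝ᵥ (x ᵥ* A) := by
  rw [← mulVec_mulVec, dotProduct_mulVec, mulVec_transpose]

lemma dotProduct_self_le_of_abs_le {v x : ι → ℝ} (h : ∀ i, |v i| ≤ |x i|) :
    v ⬝ᵥ v ≤ x ⬝ᵥ x :=
  sum_le_sum fun i _ => by
    simpa only [abs_mul_abs_self] using mul_self_le_mul_self (abs_nonneg _) (h i)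

lemma abs_vecMul_apply_le_of_abs_le {A B : Matrix ι ι ℝ} {s : ι → ℝ} (hs : ∀ i, |s i| = 1)
    (hAB : ∀ i j, |A i j| ≤ s i * s j * B i j) (w : ι → ℝ) (l : ι) :
    |(w ᵥ* A) l| ≤ |((fun k => s k * |w k|) ᵥ* B) l| := by
  have hss : s l * s l = 1 := by rw [← abs_mul_abs_self, hs, one_mul]
  have hB : ((fun k => s k * |w k|) ᵥ* B) l = s l * ∑ k, s k * s l * B k l * |w k| := by
    simp only [vecMul, dotProduct, mul_sum]
    refine sum_congr rfl fun k _ => ?_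
    linear_combination -(s k * |w k| * B k l) * hss
  calc |(w ᵥ* A) l| ≤ ∑ k, |w k| * |A k l| := by
        simpa only [vecMul, dotProduct, abs_mul] using
          abs_sum_le_sum_abs (fun k => w k * A k l) univ
    _ ≤ ∑ k, s k * s l * B k l * |w k| := sum_le_sum fun k _ => by
        rw [mul_comm]
        exact mul_le_mul_of_nonneg_right (hAB k l) (abs_nonneg _)
    _ = |((fun k => s k * |w k|) ᵥ* B) l| := by
      rw [hB, abs_mul, hs, one_mul, abs_of_nonneg (sum_nonneg fun k _ =>
        mul_nonneg ((abs_nonneg _).trans (hAB k l)) (abs_nonneg _))]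

theorem le_of_mem_spectrum_mul_transpose_of_abs_inv_le [DecidableEq ι] {Y Y₀ : Matrix ι ι ℝ}
    (hY : IsUnit Y.det) (hY₀ : IsUnit Y₀.det) {s : ι → ℝ} (hs : ∀ i, |s i| = 1)
    (hdom : ∀ i j, |Y⁻¹ i j| ≤ s i * s j * Y₀⁻¹ i j)
    {lam₀ : ℝ} (hlam₀ : ∀ ν ∈ spectrum ℝ (Y₀ * Y₀ᵀ), lam₀ ≤ ν)
    {μ : ℝ} (hμ : μ ∈ spectrum ℝ (Y * Yᵀ)) : lam₀ ≤ μ := by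
  obtain ⟨v, hv, hev⟩ := exists_mulVec_eq_smul_of_mem_spectrum hμ
  set w := v ᵥ* Y
  set x := (fun k => s k * |w k|) ᵥ* Y₀⁻¹
  have hμw : μ * (v ⬝ᵥ v) = w ⬝ᵥ w := by
    rw [← dotProduct_mul_transpose_mulVec, hev, dotProduct_smul, smul_eq_mul]
  have hxw : x ⬝ᵥ (Y₀ * Y₀ᵀ) *ᵥ x = w ⬝ᵥ w := by
    rw [dotProduct_mul_transpose_mulVec, vecMul_vecMul, nonsing_inv_mul _ hY₀, vecMul_one]
    refine sum_congr rfl fun k _ => ?_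
    rw [mul_mul_mul_comm, ← abs_mul_abs_self (s k), hs, one_mul, one_mul, abs_mul_abs_self]
  have hvx : ∀ l, |v l| ≤ |x l| := by
    have hvw : v = w ᵥ* Y⁻¹ := by rw [vecMul_vecMul, mul_nonsing_inv _ hY, vecMul_one]
    exact hvw ▸ abs_vecMul_apply_le_of_abs_le hs hdom w
  have hvv : 0 < v ⬝ᵥ v := by simpa using dotProduct_star_self_pos_iff.2 hv
  rcases le_or_gt lam₀ 0 with hlam | hlam
  · have : 0 ≤ μ * (v ⬝ᵥ v) := hμw ▸ by simpa using dotProduct_star_self_nonneg w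
    exact hlam.trans (nonneg_of_mul_nonneg_left this hvv)
  · refine le_of_mul_le_mul_right ?_ hvv
    calc lam₀ * (v ⬝ᵥ v) ≤ lam₀ * (x ⬝ᵥ x) :=
          mul_le_mul_of_nonneg_left (dotProduct_self_le_of_abs_le hvx) hlam.le
      _ ≤ x ⬝ᵥ (Y₀ * Y₀ᵀ) *ᵥ x :=
          (isHermitian_mul_conjTranspose_self Y₀).mul_dotProduct_self_le hlam₀ x
      _ = μ * (v ⬝ᵥ v) := hxw.trans hμw.symm

end Matrix

/-- The Ilmonen–Haukkanen–Merikoski conjecture: the smallest eigenvalue of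
`Z₀ = Y₀Y₀ᵀ` is less than or equal to the smallest eigenvalue of every
`Z = YYᵀ` with `Y` a lower triangular (0,1)-matrix with unit diagonal. -/
theorem stmt_15 (n : ℕ)
    (Y₀ : Matrix (Fin n) (Fin n) ℝ)
    (hY₀ : ∀ i j : Fin n, Y₀ i j =
      if i < j then 0 else if i = j then 1 else
        if (i : ℕ) % 2 ≠ (j : ℕ) % 2 then 1 else 0)
    (Z₀ : Matrix (Fin n) (Fin n) ℝ) (hZ₀ : Z₀ = Y₀ * Y₀ᵀ)
    (lam₀ : ℝ) (hlam₀ : IsLeast (spectrum ℝ Z₀) lam₀)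
    (Y : Matrix (Fin n) (Fin n) ℝ)
    (hlower : ∀ i j, i < j → Y i j = 0)
    (h01 : ∀ i j, Y i j = 0 ∨ Y i j = 1)
    (hdiag : ∀ i, Y i i = 1)
    (Z : Matrix (Fin n) (Fin n) ℝ) (hZ : Z = Y * Yᵀ) :
    ∀ μ ∈ spectrum ℝ Z, lam₀ ≤ μ := by
  intro μ hμ
  obtain rfl : Y₀ = parityMatrix n := Matrix.ext hY₀
  subst hZ₀ hZ
  have hlow : Y.IsLowerTriangular := fun i j h => hlower i j h
  have hlow₀ := parityMatrix_isLowerTriangular n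
  have hdiag₀ := parityMatrix_apply_self (n := n)
  refine le_of_mem_spectrum_mul_transpose_of_abs_inv_le
    (by simp [hlow.det_eq_one hdiag]) (by simp [hlow₀.det_eq_one hdiag₀])
    (s := fun i : Fin n => (-1) ^ (i : ℕ)) (fun i => by simp) (fun i j => ?_) hlam₀.2 hμ
  rcases lt_or_ge i j with hij | hji
  · simp [hlow.inv hdiag hij, hlow₀.inv hdiag₀ hij]
  · have hsign : (-1 : ℝ) ^ (i : ℕ) * (-1) ^ (j : ℕ) * (-1) ^ (i - j : ℕ) = 1 := by
      rw [← pow_add, ← pow_add]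
      exact Even.neg_one_pow ⟨i, by omega⟩
    rw [inv_parityMatrix_apply_of_le hji, ← mul_assoc, hsign, one_mul]
    exact abs_inv_apply_le_fibOne hlow h01 hdiag i j
end
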